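/- arXiv:2005.11693 — 3 statements merged into one kernel-verified Lean document; each statement's English description precedes it below -/
import Mathlib

section
/- Let H be a finite-dimensional complex Hilbert space, A a normal operator on H, and suppose Av = αv + w with v ≠ 0. Fix δ > 0 and let V_δ be the direct sum of eigenspaces of A for eigenvalues η with |η - α| < δ. Then there exists a unit vector e ∈ V_δ such that ‖v - ‖v‖·e‖ ≤ 2‖w‖/δ, provided V_δ ≠ 0 (which holds when ‖w‖/‖v‖ < δ). -/
/-!
A normal operator on a finite-dimensional complex space is diagonalisable with mutually orthogonal
eigenspaces: its generalised eigenspaces are eigenspaces since `ker N² = ker N` for normal `N`.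
Split `v = v_near + v_far` according to whether the eigenvalue lies within `δ` of `α`. By
Pythagoras `‖w‖² = ∑ |η - α|² ‖v_η‖² ≥ δ² ‖v_far‖²`, and normalising `v_near` to length `‖v‖`
moves it by at most `‖v_far‖` more.
-/

open Module.End

namespace ContinuousLinearMap

variable {𝕜 E : Type*} [RCLike 𝕜] [NormedAddCommGroup E] [InnerProductSpace 𝕜 E] [CompleteSpace E]
  {T : E →L[𝕜] E}

lemma IsStarNormal.sub_algebraMap (hT : IsStarNormal T) (μ : 𝕜) :
    IsStarNormal (T - algebraMap 𝕜 (E →L[𝕜] E) μ) :=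
  have : IsStarNormal (algebraMap 𝕜 (E →L[𝕜] E) μ) :=
    ⟨by rw [← algebraMap_star_comm]; exact Algebra.commute_algebraMap_left _ _⟩
  (algebraMap_star_comm (A := E →L[𝕜] E) μ ▸ Algebra.commute_algebraMap_right _ T).isStarNormal_sub

lemma IsStarNormal.apply_eq_zero_of_apply_apply_eq_zero (hT : IsStarNormal T) {x : E}
    (hx : T (T x) = 0) : T x = 0 := by
  have hker : T x ∈ (T : E →ₗ[𝕜] E).rangeᗮ := by
    rw [IsStarNormal.orthogonal_range hT]; exact hx
  exact (Submodule.orthogonal_disjoint _).le_bot ⟨LinearMap.mem_range_self _ x, hker⟩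

lemma IsStarNormal.adjoint_apply_eq_of_apply_eq (hT : IsStarNormal T) {μ : 𝕜} {x : E}
    (hx : T x = μ • x) : adjoint T x = (starRingEnd 𝕜) μ • x := by
  have := (IsStarNormal.adjoint_apply_eq_zero_iff (IsStarNormal.sub_algebraMap hT μ) x).mpr
    (by simp [hx])
  rwa [map_sub, ← star_eq_adjoint (algebraMap 𝕜 _ μ), ← algebraMap_star_comm, sub_apply,
    sub_eq_zero] at this

lemma IsStarNormal.orthogonalFamily_eigenspaces (hT : IsStarNormal T) :
    OrthogonalFamily 𝕜 (fun μ => eigenspace (T : E →ₗ[𝕜] E) μ)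
      (fun μ => (eigenspace (T : E →ₗ[𝕜] E) μ).subtypeₗᵢ) := by
  refine OrthogonalFamily.of_pairwise fun η μ hημ x hx y hy => ?_
  rw [mem_eigenspace_iff, coe_coe] at hx hy
  have key : (η - μ) * inner 𝕜 y x = 0 := by
    have := adjoint_inner_left T x y
    rw [IsStarNormal.adjoint_apply_eq_of_apply_eq hT hy, inner_smul_left, hx, inner_smul_right,
      RCLike.conj_conj] at this
    rw [sub_mul, this, sub_self]
  exact (mul_eq_zero.mp key).resolve_left (sub_ne_zero.mpr hημ)

lemma IsStarNormal.apply_eq_zero_of_iterate_eq_zero (hT : IsStarNormal T) {k : ℕ} {x : E}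
    (hx : T^[k] x = 0) : T x = 0 := by
  induction k generalizing x with
  | zero => simp_all
  | succ k ih =>
    rw [Function.iterate_succ_apply] at hx
    exact IsStarNormal.apply_eq_zero_of_apply_apply_eq_zero hT (ih hx)

lemma IsStarNormal.maxGenEigenspace_eq_eigenspace (hT : IsStarNormal T) (μ : 𝕜) :
    maxGenEigenspace (T : E →ₗ[𝕜] E) μ = eigenspace (T : E →ₗ[𝕜] E) μ := by
  refine le_antisymm (fun x hx => ?_) eigenspace_le_maxGenEigenspace
  obtain ⟨k, hk⟩ := (mem_maxGenEigenspace _ _ _).mp hx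
  have hS : (T : E →ₗ[𝕜] E) - μ • 1 =
      ((T - algebraMap 𝕜 (E →L[𝕜] E) μ : E →L[𝕜] E) : E →ₗ[𝕜] E) := by
    ext; simp
  rw [hS, pow_apply, coe_coe] at hk
  have := IsStarNormal.apply_eq_zero_of_iterate_eq_zero (IsStarNormal.sub_algebraMap hT μ) hk
  simpa [mem_eigenspace_iff, sub_eq_zero] using this

end ContinuousLinearMap

lemma ContinuousLinearMap.IsStarNormal.iSup_eigenspace_eq_top {E : Type*} [NormedAddCommGroup E]
    [InnerProductSpace ℂ E] [FiniteDimensional ℂ E] {T : E →L[ℂ] E} (hT : IsStarNormal T) :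
    ⨆ μ, eigenspace (T : E →ₗ[ℂ] E) μ = ⊤ := by
  simpa only [IsStarNormal.maxGenEigenspace_eq_eigenspace hT] using
    iSup_maxGenEigenspace_eq_top (T : E →ₗ[ℂ] E)

lemma norm_sub_norm_smul_inv_norm_smul_le {E : Type*} [NormedAddCommGroup E] [NormedSpace ℝ E]
    (v u : E) : ‖v - ‖v‖ • ‖u‖⁻¹ • u‖ ≤ 2 * ‖v - u‖ := by
  rcases eq_or_ne u 0 with rfl | hu
  · simp [two_mul]
  have hu' : ‖u‖ ≠ 0 := norm_ne_zero_iff.mpr hu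
  have hrescale : u - ‖v‖ • ‖u‖⁻¹ • u = (‖u‖ - ‖v‖) • ‖u‖⁻¹ • u := by
    rw [sub_smul, smul_inv_smul₀ hu']
  calc ‖v - ‖v‖ • ‖u‖⁻¹ • u‖ ≤ ‖v - u‖ + ‖u - ‖v‖ • ‖u‖⁻¹ • u‖ :=
        norm_sub_le_norm_sub_add_norm_sub _ _ _
    _ = ‖v - u‖ + |‖u‖ - ‖v‖| := by
      rw [hrescale, norm_smul, norm_smul, norm_inv, norm_norm, inv_mul_cancel₀ hu', mul_one,
        Real.norm_eq_abs]
    _ ≤ ‖v - u‖ + ‖v - u‖ := by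
      gcongr; rw [abs_sub_comm]; exact abs_norm_sub_norm_le v u
    _ = 2 * ‖v - u‖ := (two_mul _).symm

section OrthogonalEigenspaces

variable {𝕜 E : Type*} [RCLike 𝕜] [NormedAddCommGroup E] [InnerProductSpace 𝕜 E] {T : E →ₗ[𝕜] E}

lemma OrthogonalFamily.norm_sq_apply_sub_smul_sum_eigenvectors
    (hT : OrthogonalFamily 𝕜 (fun μ => eigenspace T μ) (fun μ => (eigenspace T μ).subtypeₗᵢ))
    (l : ∀ μ, eigenspace T μ) (s : Finset 𝕜) (α : 𝕜) :
    ‖T (∑ μ ∈ s, (l μ : E)) - α • ∑ μ ∈ s, (l μ : E)‖ ^ 2 =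
      ∑ μ ∈ s, ‖μ - α‖ ^ 2 * ‖(l μ : E)‖ ^ 2 := by
  have hsum : T (∑ μ ∈ s, (l μ : E)) - α • ∑ μ ∈ s, (l μ : E) =
      ∑ μ ∈ s, (eigenspace T μ).subtypeₗᵢ ((μ - α) • l μ) := by
    simp [map_sum, Finset.smul_sum, ← Finset.sum_sub_distrib, mem_eigenspace_iff.mp (l _).2,
      sub_smul]
  rw [hsum, hT.norm_sum]
  simp [norm_smul, mul_pow]

lemma OrthogonalFamily.mul_norm_sum_far_eigenvectors_le
    (hT : OrthogonalFamily 𝕜 (fun μ => eigenspace T μ) (fun μ => (eigenspace T μ).subtypeₗᵢ))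
    (l : ∀ μ, eigenspace T μ) (s : Finset 𝕜) (α : 𝕜) {δ : ℝ} (hδ : 0 ≤ δ) :
    δ * ‖∑ μ ∈ s with δ ≤ ‖μ - α‖, (l μ : E)‖ ≤
      ‖T (∑ μ ∈ s, (l μ : E)) - α • ∑ μ ∈ s, (l μ : E)‖ := by
  refine le_of_sq_le_sq ?_ (norm_nonneg _)
  calc (δ * ‖∑ μ ∈ s with δ ≤ ‖μ - α‖, (l μ : E)‖) ^ 2
      = ∑ μ ∈ s with δ ≤ ‖μ - α‖, δ ^ 2 * ‖(l μ : E)‖ ^ 2 := by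
        rw [mul_pow, ← Finset.mul_sum]; congr 1; exact hT.norm_sum l _
    _ ≤ ∑ μ ∈ s with δ ≤ ‖μ - α‖, ‖μ - α‖ ^ 2 * ‖(l μ : E)‖ ^ 2 := by
        gcongr with μ hμ
        exact (Finset.mem_filter.mp hμ).2
    _ ≤ ∑ μ ∈ s, ‖μ - α‖ ^ 2 * ‖(l μ : E)‖ ^ 2 :=
        Finset.sum_le_sum_of_subset_of_nonneg (Finset.filter_subset _ _) fun _ _ _ => by positivity
    _ = _ := (hT.norm_sq_apply_sub_smul_sum_eigenvectors l s α).symm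

end OrthogonalEigenspaces

/-- Quasimode lemma, part 2: if `A` is normal, `A v = α • v + w`, `v ≠ 0`, and
`‖w‖/‖v‖ < δ`, then letting `V_δ` be the sum of the eigenspaces of `A` for
eigenvalues `η` with `|η - α| < δ`, there is a unit vector `e ∈ V_δ` such that
`‖v - ‖v‖ • e‖ ≤ 2‖w‖/δ`. -/
theorem stmt1 {H : Type*} [NormedAddCommGroup H] [InnerProductSpace ℂ H]
    [FiniteDimensional ℂ H] (A : H →L[ℂ] H) (hA : IsStarNormal A)
    (v w : H) (hv : v ≠ 0) (α : ℂ) (h : A v = α • v + w)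
    (δ : ℝ) (hδ : 0 < δ) (hwv : ‖w‖ / ‖v‖ < δ) :
    ∃ e ∈ (⨆ η ∈ {η : ℂ | ‖η - α‖ < δ},
        Module.End.eigenspace (A : H →ₗ[ℂ] H) η),
      ‖e‖ = 1 ∧ ‖v - ‖v‖ • e‖ ≤ 2 * ‖w‖ / δ := by
  have hv_mem : v ∈ ⨆ η, eigenspace (A : H →ₗ[ℂ] H) η := by
    rw [ContinuousLinearMap.IsStarNormal.iSup_eigenspace_eq_top hA]; exact Submodule.mem_top
  obtain ⟨s, hs⟩ := Submodule.mem_iSup_iff_exists_finset.mp hv_mem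
  obtain ⟨l, hl⟩ := (Submodule.mem_iSup_finset_iff_exists_sum _ v).mp hs
  set near := ∑ η ∈ s with ‖η - α‖ < δ, (l η : H)
  have hfar : ‖v - near‖ ≤ ‖w‖ / δ := by
    have hfar_sum : v - near = ∑ η ∈ s with δ ≤ ‖η - α‖, (l η : H) := by
      rw [← hl, ← Finset.sum_filter_add_sum_filter_not s (‖· - α‖ < δ), add_sub_cancel_left]
      simp only [not_lt]
    have hbound := (ContinuousLinearMap.IsStarNormal.orthogonalFamily_eigenspaces hA
      ).mul_norm_sum_far_eigenvectors_le l s α hδ.le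
    rw [hl, ContinuousLinearMap.coe_coe, h, add_sub_cancel_left, ← hfar_sum] at hbound
    rwa [le_div_iff₀ hδ, mul_comm]
  have hnear : near ≠ 0 := by
    rintro hzero
    rw [hzero, sub_zero] at hfar
    linarith [(div_lt_comm₀ (norm_pos_iff.mpr hv) hδ).mp hwv]
  refine ⟨‖near‖⁻¹ • near, ?_, norm_smul_inv_norm (𝕜 := ℝ) hnear, ?_⟩
  · exact Submodule.smul_of_tower_mem _ _ <| Submodule.sum_mem _ fun η hη =>
      Submodule.mem_iSup_of_mem η <| Submodule.mem_iSup_of_mem (Finset.mem_filter.mp hη).2 (l η).2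
  · calc _ ≤ 2 * ‖v - near‖ := norm_sub_norm_smul_inv_norm_smul_le _ _
      _ ≤ 2 * (‖w‖ / δ) := by gcongr
      _ = 2 * ‖w‖ / δ := (mul_div_assoc _ _ _).symm
end

section
/- Let e^{2πiθ} be a primitive n-th root of unity (θ = p/n with gcd(p,n)=1). If X₁, X₂ are unitary operators on a finite-dimensional complex Hilbert space H satisfying X₁X₂ = e^{2πiθ}·X₂X₁ and having no common proper invariant subspace, then dim H = n. -/
/-!
Since `q = e^{2πip/n}` satisfies `q ^ n = 1`, the operator `X₂ ^ n` commutes with `X₁`, so they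
share an eigenvector `v`. The relation `X₁ X₂ = q X₂ X₁` makes `X₂ ^ k v` an eigenvector of `X₁`
with eigenvalue `q ^ k λ`; these are distinct for `k < n` because `q` is primitive, so the vectors
`v, X₂ v, …, X₂ ^ (n - 1) v` are linearly independent. Their span is invariant under `X₁` and
under `X₂` (as `X₂ ^ n v ∈ ℂ v`), hence is all of `H` by irreducibility.
-/

theorem mul_pow_eq_smul_pow_mul {R A : Type*} [CommSemiring R] [Semiring A] [Algebra R A]
    {q : R} {a b : A} (h : a * b = q • (b * a)) (k : ℕ) :
    a * b ^ k = q ^ k • (b ^ k * a) := by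
  induction k with
  | zero => simp
  | succ k ih =>
    calc a * b ^ (k + 1) = q ^ k • (b ^ k * (a * b)) := by
          rw [pow_succ, ← mul_assoc, ih, smul_mul_assoc, mul_assoc]
      _ = q ^ (k + 1) • (b ^ (k + 1) * a) := by
          rw [h, mul_smul_comm, smul_smul, pow_succ, pow_succ, mul_assoc]

namespace Module.End

variable {K V : Type*} [Field K] [AddCommGroup V] [Module K V]

theorem exists_hasEigenvector_of_commute [IsAlgClosed K] [FiniteDimensional K V] [Nontrivial V]
    {f g : End K V} (h : Commute f g) :
    ∃ v μ ν, f.HasEigenvector μ v ∧ g.HasEigenvector ν v := by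
  obtain ⟨μ, hμ⟩ := f.exists_eigenvalue
  have hg : ∀ x ∈ f.eigenspace μ, g x ∈ f.eigenspace μ := mapsTo_genEigenspace_of_comm h μ 1
  have : Nontrivial (f.eigenspace μ) := Submodule.nontrivial_iff_ne_bot.mpr hμ
  obtain ⟨ν, hν⟩ := exists_eigenvalue (g.restrict hg)
  obtain ⟨w, hw, hw0⟩ := hν.exists_hasEigenvector
  exact ⟨w, μ, ν, ⟨w.2, by simpa using hw0⟩,
    ⟨eigenspace_restrict_le_eigenspace g hg ν ⟨w, hw, rfl⟩, by simpa using hw0⟩⟩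

variable {f g : End K V} {q μ : K} {v : V}

theorem HasEigenvector.pow_apply_of_mul_eq_smul (h : f * g = q • (g * f))
    (hv : f.HasEigenvector μ v) (hg : Function.Injective g) (k : ℕ) :
    f.HasEigenvector (q ^ k * μ) ((g ^ k) v) := by
  refine ⟨mem_eigenspace_iff.mpr ?_, ?_⟩
  · rw [← mul_apply, mul_pow_eq_smul_pow_mul h, LinearMap.smul_apply, mul_apply, hv.apply_eq_smul,
      map_smul, smul_smul]
  · exact (iterate_injective hg k).ne_iff' (map_zero _) |>.mpr hv.2

theorem linearIndependent_pow_apply_of_mul_eq_smul {n : ℕ} (h : f * g = q • (g * f))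
    (hq : IsPrimitiveRoot q n) (hμ : μ ≠ 0) (hv : f.HasEigenvector μ v)
    (hg : Function.Injective g) :
    LinearIndependent K (fun k : Fin n => (g ^ (k : ℕ)) v) :=
  eigenvectors_linearIndependent' f (fun k : Fin n => q ^ (k : ℕ) * μ)
    (fun i j hij => Fin.ext (hq.pow_inj i.2 j.2 (mul_right_cancel₀ hμ hij)))
    _ (fun k => hv.pow_apply_of_mul_eq_smul h hg k)

theorem span_pow_apply_le_comap_of_mul_eq_smul {n : ℕ} (h : f * g = q • (g * f))
    (hv : f v = μ • v) :
    Submodule.span K (Set.range fun k : Fin n => (g ^ (k : ℕ)) v) ≤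
      (Submodule.span K (Set.range fun k : Fin n => (g ^ (k : ℕ)) v)).comap f := by
  rw [Submodule.span_le]
  rintro _ ⟨k, rfl⟩
  rw [SetLike.mem_coe, Submodule.mem_comap, ← mul_apply, mul_pow_eq_smul_pow_mul h,
    LinearMap.smul_apply, mul_apply, hv, map_smul]
  exact Submodule.smul_mem _ _ (Submodule.smul_mem _ _ (Submodule.subset_span ⟨k, rfl⟩))

theorem span_pow_apply_le_comap_self {n : ℕ} {ν : K} (hv : (g ^ n) v = ν • v) :
    Submodule.span K (Set.range fun k : Fin n => (g ^ (k : ℕ)) v) ≤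
      (Submodule.span K (Set.range fun k : Fin n => (g ^ (k : ℕ)) v)).comap g := by
  rw [Submodule.span_le]
  rintro _ ⟨k, rfl⟩
  rw [SetLike.mem_coe, Submodule.mem_comap, ← mul_apply, ← pow_succ']
  rcases (show (k : ℕ) + 1 ≤ n from k.2).lt_or_eq with hk | hk
  · exact Submodule.subset_span ⟨⟨k + 1, hk⟩, rfl⟩
  · rw [hk, hv]
    exact Submodule.smul_mem _ _ (Submodule.subset_span ⟨⟨0, k.pos⟩, by simp⟩)

theorem finrank_eq_of_mul_eq_smul_mul [IsAlgClosed K] [FiniteDimensional K V] [Nontrivial V]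
    {n : ℕ} (hn : n ≠ 0) (hq : IsPrimitiveRoot q n) (hf : Function.Injective f)
    (hg : Function.Injective g) (h : f * g = q • (g * f))
    (hirr : ∀ W : Submodule K V, (∀ v ∈ W, f v ∈ W) → (∀ v ∈ W, g v ∈ W) → W = ⊥ ∨ W = ⊤) :
    Module.finrank K V = n := by
  have hcomm : Commute f (g ^ n) := by
    rw [Commute, SemiconjBy, mul_pow_eq_smul_pow_mul h, hq.pow_eq_one, one_smul]
  obtain ⟨v, μ, ν, hv, hv'⟩ := exists_hasEigenvector_of_commute hcomm
  have hμ : μ ≠ 0 := by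
    rintro rfl
    exact hv.2 (hf (by rw [hv.apply_eq_smul, zero_smul, map_zero]))
  set W := Submodule.span K (Set.range fun k : Fin n => (g ^ (k : ℕ)) v)
  have hvW : v ∈ W := Submodule.subset_span ⟨⟨0, Nat.pos_of_ne_zero hn⟩, by simp⟩
  have hW : W = ⊤ := (hirr W (span_pow_apply_le_comap_of_mul_eq_smul h hv.apply_eq_smul)
    (span_pow_apply_le_comap_self hv'.apply_eq_smul)).resolve_left
    fun hW => hv.2 ((Submodule.mem_bot K).mp (hW ▸ hvW))
  rw [← finrank_top, ← hW, finrank_span_eq_card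
    (linearIndependent_pow_apply_of_mul_eq_smul h hq hμ hv hg), Fintype.card_fin]

end Module.End

open ContinuousLinearMap Real

theorem stmt7_general {H : Type*} [NormedAddCommGroup H] [InnerProductSpace ℂ H]
    [FiniteDimensional ℂ H] [Nontrivial H]
    (n : ℕ) (hn : 1 ≤ n) (p : ℕ) (hp : Nat.Coprime p n)
    (X₁ X₂ : H →L[ℂ] H)
    (hu1 : adjoint X₁ * X₁ = 1)
    (hu2 : adjoint X₂ * X₂ = 1)
    (hcomm : X₁ * X₂ =
      Complex.exp (2 * Real.pi * Complex.I * p / n) • (X₂ * X₁))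
    (hirr : ∀ V : Submodule ℂ H, (∀ v ∈ V, X₁ v ∈ V) → (∀ v ∈ V, X₂ v ∈ V) →
      V = ⊥ ∨ V = ⊤) :
    Module.finrank ℂ H = n := by
  have hn0 : n ≠ 0 := Nat.one_le_iff_ne_zero.mp hn
  have hq := Complex.isPrimitiveRoot_exp_of_coprime p n hn0 hp
  rw [← mul_div_assoc] at hq
  have injective_of_adjoint_mul_self {X : H →L[ℂ] H} (hX : adjoint X * X = 1) :
      Function.Injective X :=
    Function.LeftInverse.injective (g := adjoint X) fun x => by simpa using congr($hX x)
  exact Module.End.finrank_eq_of_mul_eq_smul_mul (f := X₁) (g := X₂) hn0 hq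
    (injective_of_adjoint_mul_self hu1) (injective_of_adjoint_mul_self hu2)
    (LinearMap.ext fun x => congr($hcomm x)) hirr

/-- If unitaries `X₁, X₂` on a nonzero finite-dimensional complex Hilbert
space satisfy `X₁X₂ = e^{2πi p/n} X₂X₁` with `e^{2πi p/n}` a primitive `n`-th
root of unity, and act irreducibly, then `dim H = n`. -/
theorem stmt7 {H : Type*} [NormedAddCommGroup H] [InnerProductSpace ℂ H]
    [FiniteDimensional ℂ H] [Nontrivial H]
    (n : ℕ) (hn : 1 ≤ n) (p : ℕ) (hp : Nat.Coprime p n)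
    (X₁ X₂ : H →L[ℂ] H)
    (hu1 : adjoint X₁ * X₁ = 1) (hu1' : X₁ * adjoint X₁ = 1)
    (hu2 : adjoint X₂ * X₂ = 1) (hu2' : X₂ * adjoint X₂ = 1)
    (hcomm : X₁ * X₂ =
      Complex.exp (2 * Real.pi * Complex.I * p / n) • (X₂ * X₁))
    (hirr : ∀ V : Submodule ℂ H, (∀ v ∈ V, X₁ v ∈ V) → (∀ v ∈ V, X₂ v ∈ V) →
      V = ⊥ ∨ V = ⊤) :
    Module.finrank ℂ H = n :=
  stmt7_general n hn p hp X₁ X₂ hu1 hu2 hcomm hirr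
end

section
/- Let x₁, x₂ be unitary operators on a finite-dimensional Hilbert space H with ‖x₁x₂ - e^{2πi/n}·x₂x₁‖_op ≤ ε, where n ≥ 1 and ε·n < 2·sin(π/n) (so that the points λ₀e^{2πim/n} shifted by error mε remain distinct). Then for any eigenvalue λ₀ of x₁, and for every 0 ≤ m < n, there exists an eigenvalue λ_m of x₁ with |λ_m - λ₀·e^{2πim/n}| ≤ m·ε. In particular, if these n values are pairwise distinct, then dim H ≥ n. -/
/-!
If `x₁ w = ν w` with `w ≠ 0`, then `x₂ w` is an approximate eigenvector of `x₁` for `e ν`,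
with error at most `ε ‖x₂ w‖`. For a normal operator the resolvent at `μ` has norm
`1 / dist(μ, σ)`, so such a quasimode forces an eigenvalue within `ε` of `e ν`. Since
`|e| = 1`, iterating from `λ₀` accumulates an error of at most `m ε` after `m` steps, and
distinct eigenvalues have linearly independent eigenvectors.
-/

open ContinuousLinearMap Module Metric Module.End

theorem exists_mem_norm_sub_mul_pow_le {𝕜 : Type*} [NormedField 𝕜] {S : Set 𝕜} {e : 𝕜}
    (he : ‖e‖ = 1) {ε : ℝ} (hS : ∀ ν ∈ S, ∃ ν' ∈ S, ‖ν' - e * ν‖ ≤ ε) {ν : 𝕜} (hν : ν ∈ S)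
    (m : ℕ) : ∃ c ∈ S, ‖c - ν * e ^ m‖ ≤ m * ε := by
  induction m with
  | zero => exact ⟨ν, hν, by simp⟩
  | succ m ih =>
    obtain ⟨c, hc, hcm⟩ := ih
    obtain ⟨c', hc', hcc'⟩ := hS c hc
    refine ⟨c', hc', ?_⟩
    calc ‖c' - ν * e ^ (m + 1)‖ = ‖(c' - e * c) + e * (c - ν * e ^ m)‖ := by ring_nf
      _ ≤ ‖c' - e * c‖ + ‖c - ν * e ^ m‖ := by
          grw [norm_add_le, norm_mul, he, one_mul]
      _ ≤ ((m + 1 : ℕ) : ℝ) * ε := by push_cast; linarith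

theorem Module.End.card_le_finrank_of_injective {K V ι : Type*} [Field K] [AddCommGroup V]
    [Module K V] [FiniteDimensional K V] [Fintype ι] (f : End K V) {μ : ι → K}
    (hμ : Function.Injective μ) (h : ∀ i, f.HasEigenvalue (μ i)) :
    Fintype.card ι ≤ finrank K V := by
  choose v hv using fun i => (h i).exists_hasEigenvector
  exact (eigenvectors_linearIndependent' f μ hμ v hv).fintype_card_le_finrank

section Hilbert
variable {E : Type*} [NormedAddCommGroup E] [InnerProductSpace ℂ E] [CompleteSpace E]

theorem IsStarNormal.infDist_spectrum_mul_norm_le (T : E →L[ℂ] E) [IsStarNormal T] (μ : ℂ)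
    (v : E) : infDist μ (spectrum ℂ T) * ‖v‖ ≤ ‖T v - μ • v‖ := by
  obtain hd | hd := (infDist_nonneg (x := μ) (s := spectrum ℂ T)).eq_or_lt
  · rw [← hd, zero_mul]; exact norm_nonneg _
  set d := infDist μ (spectrum ℂ T)
  have hdist : ∀ z ∈ spectrum ℂ T, d ≤ ‖z - μ‖ := fun z hz => by
    rw [← dist_eq_norm, dist_comm]; exact infDist_le_dist_of_mem hz
  have hne : ∀ z ∈ spectrum ℂ T, z - μ ≠ 0 := fun z hz =>
    norm_pos_iff.mp (hd.trans_le (hdist z hz))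
  have hcont : ContinuousOn (fun z : ℂ => z - μ) (spectrum ℂ T) := by fun_prop
  set R := cfc (fun z => (z - μ)⁻¹) T
  have hR : R * cfc (fun z => z - μ) T = 1 := by
    rw [← cfc_mul (fun z => (z - μ)⁻¹) (fun z => z - μ) T (hcont.inv₀ hne) hcont,
      ← cfc_one ℂ T]
    exact cfc_congr fun z hz => inv_mul_cancel₀ (hne z hz)
  have hRv : R (T v - μ • v) = v := by
    rw [cfc_sub .., cfc_id' ℂ T, cfc_const μ T, Algebra.algebraMap_eq_smul_one] at hR
    simpa using congr($hR v)
  have hRnorm : ‖R‖ ≤ d⁻¹ :=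
    norm_cfc_le (inv_nonneg.mpr hd.le) fun z hz => by
      rw [norm_inv]; exact inv_anti₀ hd (hdist z hz)
  calc d * ‖v‖ = d * ‖R (T v - μ • v)‖ := by rw [hRv]
    _ ≤ d * (d⁻¹ * ‖T v - μ • v‖) := by
        gcongr; exact R.le_of_opNorm_le hRnorm _
    _ = ‖T v - μ • v‖ := by field_simp

theorem IsStarNormal.exists_mem_spectrum_norm_sub_le (T : E →L[ℂ] E) [IsStarNormal T]
    {μ : ℂ} {δ : ℝ} {v : E} (hv : v ≠ 0) (hq : ‖T v - μ • v‖ ≤ δ * ‖v‖) :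
    ∃ z ∈ spectrum ℂ T, ‖z - μ‖ ≤ δ := by
  have : Nontrivial E := nontrivial_of_ne v 0 hv
  obtain ⟨z, hz, hdist⟩ :=
    (spectrum.isCompact T).exists_infDist_eq_dist (spectrum.nonempty T) μ
  refine ⟨z, hz, ?_⟩
  have := (infDist_spectrum_mul_norm_le T μ v).trans hq
  rw [hdist, dist_comm, dist_eq_norm] at this
  exact le_of_mul_le_mul_right this (norm_pos_iff.mpr hv)

end Hilbert

theorem exists_hasEigenvalue_norm_sub_mul_le {E : Type*} [NormedAddCommGroup E]
    [InnerProductSpace ℂ E] [FiniteDimensional ℂ E] (x₁ x₂ : E →L[ℂ] E)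
    [IsStarNormal x₁] (hx₂ : ∀ w, ‖x₂ w‖ = ‖w‖) (e : ℂ) {ν : ℂ}
    (hν : HasEigenvalue (x₁ : E →ₗ[ℂ] E) ν) :
    ∃ ν', HasEigenvalue (x₁ : E →ₗ[ℂ] E) ν' ∧ ‖ν' - e * ν‖ ≤ ‖x₁ * x₂ - e • (x₂ * x₁)‖ := by
  obtain ⟨w, hw⟩ := hν.exists_hasEigenvector
  have hx₂w : x₂ w ≠ 0 := by rw [← norm_ne_zero_iff, hx₂]; exact norm_ne_zero_iff.mpr hw.2
  have hq : ‖x₁ (x₂ w) - (e * ν) • x₂ w‖ ≤ ‖x₁ * x₂ - e • (x₂ * x₁)‖ * ‖x₂ w‖ := by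
    have : x₁ (x₂ w) - (e * ν) • x₂ w = (x₁ * x₂ - e • (x₂ * x₁)) w := by
      have hx₁w : x₁ w = ν • w := hw.apply_eq_smul
      simp [hx₁w, smul_smul]
    rw [this, hx₂]
    exact le_opNorm _ _
  obtain ⟨ν', hν', hdist⟩ := IsStarNormal.exists_mem_spectrum_norm_sub_le x₁ hx₂w hq
  exact ⟨ν', hasEigenvalue_iff_mem_spectrum.mpr (by rwa [← spectrum_eq]), hdist⟩

theorem stmt11_general {H : Type*} [NormedAddCommGroup H] [InnerProductSpace ℂ H]
    [FiniteDimensional ℂ H] (n : ℕ)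
    (x₁ x₂ : H →L[ℂ] H)
    (hu1 : adjoint x₁ * x₁ = 1) (hu1' : x₁ * adjoint x₁ = 1)
    (hu2 : adjoint x₂ * x₂ = 1)
    (ε : ℝ)
    (h : ‖x₁ * x₂ - Complex.exp (2 * Real.pi * Complex.I / n) • (x₂ * x₁)‖ ≤ ε)
    (lam₀ : ℂ) (h0 : Module.End.HasEigenvalue (x₁ : H →ₗ[ℂ] H) lam₀) :
    ∃ lam : Fin n → ℂ,
      (∀ m : Fin n, Module.End.HasEigenvalue (x₁ : H →ₗ[ℂ] H) (lam m) ∧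
        ‖lam m - lam₀ * Complex.exp (2 * Real.pi * Complex.I / n) ^ (m : ℕ)‖ ≤
          (m : ℕ) * ε) ∧
      (Function.Injective lam → n ≤ Module.finrank ℂ H) := by
  set e := Complex.exp (2 * Real.pi * Complex.I / n)
  have he : ‖e‖ = 1 := by simp [e, Complex.norm_exp]
  have : IsStarNormal x₁ :=
    isStarNormal_of_mem_unitary <|
      Unitary.mem_iff.mpr ⟨by rwa [star_eq_adjoint], by rwa [star_eq_adjoint]⟩
  have hstep (ν : ℂ) (hν : HasEigenvalue (x₁ : H →ₗ[ℂ] H) ν) :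
      ∃ ν', HasEigenvalue (x₁ : H →ₗ[ℂ] H) ν' ∧ ‖ν' - e * ν‖ ≤ ε :=
    let ⟨ν', hν', hdist⟩ := exists_hasEigenvalue_norm_sub_mul_le x₁ x₂
      ((norm_map_iff_adjoint_comp_self x₂).mpr hu2) e hν
    ⟨ν', hν', hdist.trans h⟩
  choose lam hlam using exists_mem_norm_sub_mul_pow_le he hstep h0
  refine ⟨fun m => lam m, fun m => hlam m, fun hinj => ?_⟩
  simpa using card_le_finrank_of_injective (x₁ : H →ₗ[ℂ] H) hinj fun m => (hlam m).1

/-- Iterated ladder: if unitaries `x₁, x₂` satisfy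
`‖x₁x₂ - e^{2πi/n} • x₂x₁‖ ≤ ε` with `εn < 2 sin(π/n)`, then starting from any
eigenvalue `λ₀` of `x₁` one obtains, for every `0 ≤ m < n`, an eigenvalue
`λ_m` of `x₁` with `|λ_m - λ₀ e^{2πim/n}| ≤ mε`; if these are pairwise
distinct then `dim H ≥ n`. -/
theorem stmt11 {H : Type*} [NormedAddCommGroup H] [InnerProductSpace ℂ H]
    [FiniteDimensional ℂ H] (n : ℕ) (hn : 1 ≤ n)
    (x₁ x₂ : H →L[ℂ] H)
    (hu1 : adjoint x₁ * x₁ = 1) (hu1' : x₁ * adjoint x₁ = 1)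
    (hu2 : adjoint x₂ * x₂ = 1) (hu2' : x₂ * adjoint x₂ = 1)
    (ε : ℝ) (hε : 0 ≤ ε)
    (hsmall : ε * n < 2 * Real.sin (Real.pi / n))
    (h : ‖x₁ * x₂ - Complex.exp (2 * Real.pi * Complex.I / n) • (x₂ * x₁)‖ ≤ ε)
    (lam₀ : ℂ) (h0 : Module.End.HasEigenvalue (x₁ : H →ₗ[ℂ] H) lam₀) :
    ∃ lam : Fin n → ℂ,
      (∀ m : Fin n, Module.End.HasEigenvalue (x₁ : H →ₗ[ℂ] H) (lam m) ∧
        ‖lam m - lam₀ * Complex.exp (2 * Real.pi * Complex.I / n) ^ (m : ℕ)‖ ≤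
          (m : ℕ) * ε) ∧
      (Function.Injective lam → n ≤ Module.finrank ℂ H) :=
  stmt11_general n x₁ x₂ hu1 hu1' hu2 ε h lam₀ h0
end
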